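/- If X is distributed according to the symmetric Dirichlet distribution with concentration parameter n on the m-simplex, then for each coordinate j, E[−X_j ln X_j] = (1/m)(H_{mn} − H_n). -/

import Mathlib

open MeasureTheory Real

/-- The standard probability simplex in `ℝ^m`, parametrized by its first `m-1`
coordinates: the last coordinate is `1 - ∑ y j`. -/
def simplexParam (m : ℕ) : Set (Fin (m - 1) → ℝ) :=
  {y | (∀ j, 0 ≤ y j) ∧ ∑ j, y j ≤ 1}

/-- The density of the symmetric Dirichlet distribution with parameter `n`
on the `m`-simplex, in the first `m-1` coordinates. -/
noncomputable def dirichletDensity (m n : ℕ) (y : Fin (m - 1) → ℝ) : ℝ :=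
  (Real.Gamma (m * n) / Real.Gamma n ^ m) *
    ((∏ j, (y j) ^ (n - 1)) * (1 - ∑ j, y j) ^ (n - 1))

/-- The `j`-th coordinate of the full probability vector determined by its
first `m-1` coordinates `y`. -/
noncomputable def simplexCoord (m : ℕ) (j : Fin m) (y : Fin (m - 1) → ℝ) : ℝ :=
  if h : (j : ℕ) < m - 1 then y ⟨j, h⟩ else 1 - ∑ i, y i

/-!
By symmetry of the Dirichlet density under permutations of the `m` coordinates it suffices to
treat the last coordinate `1 - ∑ y`; on the parametrisation the symmetry is the affine involution
exchanging coordinate `j` with that implicit last one, which preserves Lebesgue measure.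
Integrating out the first `m - 1` coordinates one at a time (Fubini on a triangle and the Beta
integral) shows that the last coordinate is `Beta(n, (m - 1) n)`-distributed. Finally
`∫₀¹ xᵖ (1 - x)^q (-x log x) dx` follows from `∫₀¹ xᵖ (-x log x) dx = 1 / (p + 2)²` by the
recurrence `(1 - x)^(q+1) = (1 - x)^q - x (1 - x)^q`, which produces the harmonic numbers.
-/

open Nat Set Function

theorem integral_pow_mul_one_sub_pow (p q : ℕ) :
    ∫ x in (0 : ℝ)..1, x ^ p * (1 - x) ^ q = (p ! * q ! : ℝ) / (p + q + 1)! := by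
  induction q generalizing p with
  | zero =>
    simp only [pow_zero, mul_one, integral_pow, one_pow, factorial_zero, add_zero,
      factorial_succ]
    simp [field]
  | succ q ih =>
    have hsplit : ∀ x : ℝ,
        x ^ p * (1 - x) ^ (q + 1) = x ^ p * (1 - x) ^ q - x ^ (p + 1) * (1 - x) ^ q :=
      fun x => by ring
    simp_rw [hsplit]
    rw [intervalIntegral.integral_sub (Continuous.intervalIntegrable (by fun_prop) _ _)
      (Continuous.intervalIntegrable (by fun_prop) _ _), ih, ih,
      show p + 1 + q + 1 = p + q + 1 + 1 by ring, show p + (q + 1) + 1 = p + q + 1 + 1 by ring]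
    simp only [factorial_succ]
    push_cast
    field_simp
    ring

theorem integral_pow_mul_sub_pow (p q : ℕ) (r : ℝ) :
    ∫ u in (0 : ℝ)..r, u ^ p * (r - u) ^ q =
      (p ! * q ! : ℝ) / (p + q + 1)! * r ^ (p + q + 1) := by
  have hscale := intervalIntegral.smul_integral_comp_mul_left
    (fun u : ℝ => u ^ p * (r - u) ^ q) r (a := 0) (b := 1)
  simp only [mul_zero, mul_one, smul_eq_mul] at hscale
  have hpow : ∀ x : ℝ, (r * x) ^ p * (r - r * x) ^ q = r ^ (p + q) * (x ^ p * (1 - x) ^ q) :=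
    fun x => by rw [← mul_one_sub, mul_pow, mul_pow]; ring
  simp_rw [← hscale, hpow, intervalIntegral.integral_const_mul, integral_pow_mul_one_sub_pow]
  ring

theorem integral_pow_mul_negMulLog (p : ℕ) :
    ∫ x in (0 : ℝ)..1, x ^ p * negMulLog x = 1 / ((p : ℝ) + 2) ^ 2 := by
  have hderiv : ∀ x ∈ Ioo (0 : ℝ) 1, HasDerivAt
      (fun x => x ^ (p + 2) / ((p : ℝ) + 2) ^ 2 + x ^ (p + 1) * negMulLog x / ((p : ℝ) + 2))
      (x ^ p * negMulLog x) x := by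
    intro x hx
    refine (((hasDerivAt_pow (p + 2) x).div_const _).add
      (((hasDerivAt_pow (p + 1) x).mul (hasDerivAt_negMulLog hx.1.ne')).div_const _)).congr_deriv
      ?_
    rw [show p + 2 - 1 = p + 1 by omega]
    simp only [negMulLog, Nat.add_sub_cancel, Nat.cast_add, Nat.cast_ofNat, Nat.cast_one]
    field_simp
    ring
  rw [intervalIntegral.integral_eq_sub_of_hasDerivAt_of_le zero_le_one (by fun_prop) hderiv
    (Continuous.intervalIntegrable (by fun_prop) _ _)]
  simp [field]

theorem integral_pow_mul_one_sub_pow_mul_negMulLog (p q : ℕ) :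
    ∫ x in (0 : ℝ)..1, x ^ p * (1 - x) ^ q * negMulLog x =
      ((p + 1)! * q ! : ℝ) / (p + q + 2)! * ((harmonic (p + q + 2) : ℝ) - harmonic (p + 1)) := by
  induction q generalizing p with
  | zero =>
    simp only [pow_zero, mul_one, integral_pow_mul_negMulLog, add_zero, harmonic_succ,
      factorial_succ (p + 1)]
    push_cast
    field_simp
    ring
  | succ q ih =>
    have hsplit : ∀ x : ℝ, x ^ p * (1 - x) ^ (q + 1) * negMulLog x =
        x ^ p * (1 - x) ^ q * negMulLog x - x ^ (p + 1) * (1 - x) ^ q * negMulLog x :=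
      fun x => by ring
    simp_rw [hsplit]
    rw [intervalIntegral.integral_sub (Continuous.intervalIntegrable (by fun_prop) _ _)
      (Continuous.intervalIntegrable (by fun_prop) _ _), ih, ih,
      show p + 1 + q + 2 = p + q + 2 + 1 by ring, show p + (q + 1) + 2 = p + q + 2 + 1 by ring]
    simp only [factorial_succ, harmonic_succ]
    push_cast
    field_simp
    ring

theorem integral_integral_triangle_swap {F : ℝ → ℝ → ℝ} (hF : Continuous (uncurry F)) {r : ℝ}
    (hr : 0 ≤ r) :
    ∫ u in (0 : ℝ)..r, ∫ t in (0 : ℝ)..(r - u), F u t =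
      ∫ t in (0 : ℝ)..r, ∫ u in (0 : ℝ)..(r - t), F u t := by
  let H : ℝ → ℝ → ℝ := fun u t => {p : ℝ × ℝ | p.1 + p.2 ≤ r}.indicator (uncurry F) (u, t)
  have hH : IntegrableOn (uncurry H) (uIoc 0 r ×ˢ uIoc 0 r) :=
    ((hF.continuousOn.integrableOn_compact (isCompact_uIcc.prod isCompact_uIcc)).indicator
      (measurableSet_le (by fun_prop) (by fun_prop))).mono_set
      (prod_mono uIoc_subset_uIcc uIoc_subset_uIcc)
  have hmem : ∀ {s : ℝ}, s ∈ uIcc 0 r → r - s ∈ Icc 0 r := fun hs => by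
    rw [uIcc_of_le hr] at hs; constructor <;> linarith [hs.1, hs.2]
  calc ∫ u in (0 : ℝ)..r, ∫ t in (0 : ℝ)..(r - u), F u t
      = ∫ u in (0 : ℝ)..r, ∫ t in (0 : ℝ)..r, H u t := by
        refine intervalIntegral.integral_congr fun u hu => ?_
        rw [← intervalIntegral.integral_indicator (hmem hu)]
        congr! 2 with t
        simp [H, indicator_apply, le_sub_iff_add_le']
    _ = ∫ t in (0 : ℝ)..r, ∫ u in (0 : ℝ)..r, H u t := intervalIntegral_intervalIntegral_swap hH
    _ = ∫ t in (0 : ℝ)..r, ∫ u in (0 : ℝ)..(r - t), F u t := by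
        refine intervalIntegral.integral_congr fun t ht => ?_
        rw [← intervalIntegral.integral_indicator (hmem ht)]
        congr! 2 with u
        simp [H, indicator_apply, le_sub_iff_add_le]

theorem integral_pow_mul_integral_sub_pow_mul {g : ℝ → ℝ} (hg : Continuous g) (p q : ℕ) {r : ℝ}
    (hr : 0 ≤ r) :
    ∫ u in (0 : ℝ)..r, u ^ p * ∫ t in (0 : ℝ)..(r - u), (r - u - t) ^ q * g t =
      (p ! * q ! : ℝ) / (p + q + 1)! * ∫ t in (0 : ℝ)..r, (r - t) ^ (p + q + 1) * g t := by
  simp_rw [← intervalIntegral.integral_const_mul]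
  rw [integral_integral_triangle_swap (F := fun u t => u ^ p * ((r - u - t) ^ q * g t))
    (by fun_prop) hr]
  refine intervalIntegral.integral_congr fun t _ => ?_
  have hrt : ∀ u, u ^ p * ((r - u - t) ^ q * g t) = u ^ p * (r - t - u) ^ q * g t :=
    fun u => by ring
  simp_rw [hrt, intervalIntegral.integral_mul_const, integral_pow_mul_sub_pow]
  ring

def cornerSimplex (k : ℕ) (r : ℝ) : Set (Fin k → ℝ) :=
  {y | (∀ i, 0 ≤ y i) ∧ ∑ i, y i ≤ r}

section cornerSimplex

variable {k : ℕ} {r : ℝ}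

theorem isClosed_cornerSimplex (k : ℕ) (r : ℝ) : IsClosed (cornerSimplex k r) := by
  simp only [cornerSimplex, ofPred_and, ofPred_forall]
  exact (isClosed_iInter fun i => isClosed_le continuous_const (continuous_apply i)).inter
    (isClosed_le (by fun_prop) continuous_const)

theorem measurableSet_cornerSimplex (k : ℕ) (r : ℝ) : MeasurableSet (cornerSimplex k r) :=
  (isClosed_cornerSimplex k r).measurableSet

theorem le_of_mem_cornerSimplex {y : Fin k → ℝ} (hy : y ∈ cornerSimplex k r) (i : Fin k) :
    y i ≤ r :=
  (Finset.single_le_sum (fun j _ => hy.1 j) (Finset.mem_univ i)).trans hy.2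

theorem nonneg_of_mem_cornerSimplex {y : Fin k → ℝ} (hy : y ∈ cornerSimplex k r) : 0 ≤ r :=
  (Finset.sum_nonneg fun i _ => hy.1 i).trans hy.2

theorem cornerSimplex_zero (hr : 0 ≤ r) : cornerSimplex 0 r = univ := by
  simp [cornerSimplex, hr]

theorem isCompact_cornerSimplex (k : ℕ) (r : ℝ) : IsCompact (cornerSimplex k r) :=
  isCompact_Icc.of_isClosed_subset (isClosed_cornerSimplex k r) fun _ hy =>
    ⟨hy.1, le_of_mem_cornerSimplex hy⟩

theorem cons_mem_cornerSimplex_iff {u : ℝ} {y : Fin k → ℝ} :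
    (Fin.cons u y : Fin (k + 1) → ℝ) ∈ cornerSimplex (k + 1) r ↔
      0 ≤ u ∧ y ∈ cornerSimplex k (r - u) := by
  simp only [cornerSimplex, mem_ofPred_eq, Fin.forall_fin_succ, Fin.cons_zero, Fin.cons_succ,
    Fin.sum_cons, le_sub_iff_add_le']
  tauto

theorem setIntegral_cornerSimplex_succ {F : (Fin (k + 1) → ℝ) → ℝ} (hF : Continuous F)
    (hr : 0 ≤ r) :
    ∫ y in cornerSimplex (k + 1) r, F y =
      ∫ u in (0 : ℝ)..r, ∫ y in cornerSimplex k (r - u), F (Fin.cons u y) := by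
  have he := (volume_preserving_piFinSuccAbove (fun _ : Fin (k + 1) => ℝ) 0).symm
  have hint : Integrable ((cornerSimplex (k + 1) r).indicator F) :=
    (integrable_indicator_iff (measurableSet_cornerSimplex _ _)).2
      (hF.continuousOn.integrableOn_compact (isCompact_cornerSimplex _ _))
  have hslice : ∀ u : ℝ, ∫ y, (cornerSimplex (k + 1) r).indicator F (Fin.cons u y) =
      (Icc 0 r).indicator (fun u => ∫ y in cornerSimplex k (r - u), F (Fin.cons u y)) u := by
    intro u
    by_cases hu : u ∈ Icc 0 r
    · rw [indicator_of_mem hu, ← integral_indicator (measurableSet_cornerSimplex _ _)]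
      congr 1 with y
      by_cases hy : y ∈ cornerSimplex k (r - u)
      · rw [indicator_of_mem hy, indicator_of_mem (cons_mem_cornerSimplex_iff.2 ⟨hu.1, hy⟩)]
      · rw [indicator_of_notMem hy,
          indicator_of_notMem (mt cons_mem_cornerSimplex_iff.1 (by tauto))]
    · rw [indicator_of_notMem hu]
      have hout : ∀ y, (Fin.cons u y : Fin (k + 1) → ℝ) ∉ cornerSimplex (k + 1) r := by
        simp only [cons_mem_cornerSimplex_iff]
        exact fun y ⟨hu0, hy⟩ => hu ⟨hu0, by linarith [nonneg_of_mem_cornerSimplex hy]⟩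
      simp [indicator_of_notMem (hout _)]
  rw [← integral_indicator (measurableSet_cornerSimplex _ _), ← he.integral_comp',
    Measure.volume_eq_prod, integral_prod _ ?_]
  · simp_rw [MeasurableEquiv.piFinSuccAbove_symm_apply, Fin.insertNthEquiv,
      Equiv.coe_fn_mk, Fin.insertNth_zero', hslice]
    rw [integral_indicator measurableSet_Icc, integral_Icc_eq_integral_Ioc,
      intervalIntegral.integral_of_le hr]
  · rw [← Measure.volume_eq_prod]
    exact (he.integrable_comp_emb (MeasurableEquiv.measurableEmbedding _)).2 hint

end cornerSimplex

theorem setIntegral_cornerSimplex_prod_pow_mul {g : ℝ → ℝ} (hg : Continuous g) (a k : ℕ)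
    {r : ℝ} (hr : 0 ≤ r) :
    ∫ y in cornerSimplex (k + 1) r, (∏ i, y i ^ a) * g (r - ∑ i, y i) =
      (a ! ^ (k + 1) / (k * (a + 1) + a)! : ℝ) *
        ∫ t in (0 : ℝ)..r, (r - t) ^ (k * (a + 1) + a) * g t := by
  have hprod : ∀ {n : ℕ} (u : ℝ) (y : Fin n → ℝ),
      ∏ i, (Fin.cons u y : Fin (n + 1) → ℝ) i ^ a = u ^ a * ∏ i, y i ^ a := fun u y => by
    simp [Fin.prod_univ_succ]
  have hsub : ∀ {r u : ℝ}, 0 ≤ r → u ∈ uIcc 0 r → 0 ≤ r - u := fun hr hu => by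
    rw [uIcc_of_le hr] at hu; linarith [hu.2]
  induction k generalizing r with
  | zero =>
    rw [setIntegral_cornerSimplex_succ (by fun_prop) hr]
    simp only [hprod, Fin.sum_cons, Finset.univ_eq_empty, Finset.prod_empty, Finset.sum_empty]
    rw [intervalIntegral.integral_congr fun u hu => by rw [cornerSimplex_zero (hsub hr hu)]]
    simpa [Measure.real, volume_pi, factorial_ne_zero] using
      intervalIntegral.integral_comp_sub_left (fun t => (r - t) ^ a * g t) r (a := 0) (b := r)
  | succ k ih =>
    rw [setIntegral_cornerSimplex_succ (by fun_prop) hr]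
    simp only [hprod, Fin.sum_cons, mul_assoc, integral_const_mul, ← sub_sub]
    rw [intervalIntegral.integral_congr fun u hu => by rw [ih (hsub hr hu)]]
    simp_rw [mul_left_comm (_ ^ a), intervalIntegral.integral_const_mul,
      integral_pow_mul_integral_sub_pow_mul hg a _ hr,
      show a + (k * (a + 1) + a) + 1 = (k + 1) * (a + 1) + a by ring]
    field_simp
    ring

theorem LinearMap.measurePreserving_of_involutive {E : Type*} [NormedAddCommGroup E]
    [NormedSpace ℝ E] [MeasurableSpace E] [BorelSpace E] [FiniteDimensional ℝ E]
    (μ : Measure E) [μ.IsAddHaarMeasure] {f : E →ₗ[ℝ] E} (hf : Involutive f) :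
    MeasurePreserving f μ μ := by
  have hdet : LinearMap.det f * LinearMap.det f = 1 := by
    rw [← LinearMap.det_comp, show f ∘ₗ f = LinearMap.id from LinearMap.ext hf, LinearMap.det_id]
  have habs : |LinearMap.det f| = 1 := by
    rcases mul_self_eq_one_iff.1 hdet with h | h <;> simp [h]
  refine ⟨f.continuous_of_finiteDimensional.measurable, ?_⟩
  rw [Measure.map_linearMap_addHaar_eq_smul_addHaar μ (by simp [← abs_ne_zero, habs]), abs_inv,
    habs]
  simp

theorem Fintype.sum_update_eq_sub_add {ι M : Type*} [Fintype ι] [DecidableEq ι] [AddCommGroup M]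
    (y : ι → M) (j : ι) (b : M) : ∑ i, update y j b i = ∑ i, y i - y j + b := by
  rw [Finset.sum_update_of_mem (Finset.mem_univ j),
    Finset.sum_eq_add_sum_sdiff_singleton_of_mem (Finset.mem_univ j) y]
  abel

section simplexSwapLast

variable {k : ℕ} (j : Fin k)

/-- In the full simplex coordinates `(y, 1 - ∑ y)`, this exchanges coordinate `j` with the
last one. -/
def simplexSwapLast (y : Fin k → ℝ) : Fin k → ℝ :=
  update y j (1 - ∑ i, y i)

theorem simplexSwapLast_apply_self (y : Fin k → ℝ) :
    simplexSwapLast j y j = 1 - ∑ i, y i :=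
  update_self _ _ _

theorem sum_simplexSwapLast (y : Fin k → ℝ) : ∑ i, simplexSwapLast j y i = 1 - y j := by
  rw [simplexSwapLast, Fintype.sum_update_eq_sub_add]
  ring

theorem simplexSwapLast_involutive : Involutive (simplexSwapLast j) := fun y => by
  rw [simplexSwapLast, sum_simplexSwapLast, simplexSwapLast, update_idem, sub_sub_cancel,
    update_eq_self]

theorem measurePreserving_simplexSwapLast : MeasurePreserving (simplexSwapLast j) := by
  let L : (Fin k → ℝ) →ₗ[ℝ] (Fin k → ℝ) :=
    { toFun := fun y => update y j (-∑ i, y i)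
      map_add' := fun y z => by
        ext i; by_cases h : i = j <;> simp [h, Finset.sum_add_distrib]; ring
      map_smul' := fun c y => by
        ext i; by_cases h : i = j <;> simp [h, Finset.mul_sum] }
  have hL : Involutive L := fun y => by
    simp only [L, LinearMap.coe_mk, AddHom.coe_mk, Fintype.sum_update_eq_sub_add, update_idem]
    simp
  have hsplit : simplexSwapLast j = (· + Pi.single j 1) ∘ L := by
    ext y i; by_cases h : i = j <;> simp [simplexSwapLast, L, h]; ring
  rw [hsplit]
  exact (measurePreserving_add_right _ _).comp (L.measurePreserving_of_involutive _ hL)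

theorem measurableEmbedding_simplexSwapLast : MeasurableEmbedding (simplexSwapLast j) :=
  have hmeas := (measurePreserving_simplexSwapLast j).measurable
  MeasurableEmbedding.of_measurable_inverse hmeas
    ((simplexSwapLast_involutive j).surjective.range_eq ▸ .univ) hmeas
    (simplexSwapLast_involutive j)

theorem mapsTo_simplexSwapLast :
    MapsTo (simplexSwapLast j) (cornerSimplex k 1) (cornerSimplex k 1) := by
  intro y ⟨hy0, hy1⟩
  refine ⟨fun i => ?_, by rw [sum_simplexSwapLast]; linarith [hy0 j]⟩
  by_cases h : i = j
  · subst h; rw [simplexSwapLast_apply_self]; linarith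
  · rw [simplexSwapLast, update_of_ne h]; exact hy0 i

theorem preimage_simplexSwapLast_cornerSimplex :
    simplexSwapLast j ⁻¹' cornerSimplex k 1 = cornerSimplex k 1 :=
  (mapsTo_simplexSwapLast j).subset_preimage.antisymm' fun y hy =>
    simplexSwapLast_involutive j y ▸ mapsTo_simplexSwapLast j hy

theorem dirichletDensity_simplexSwapLast {m : ℕ} (n : ℕ) (j : Fin (m - 1))
    (y : Fin (m - 1) → ℝ) :
    dirichletDensity m n (simplexSwapLast j y) = dirichletDensity m n y := by
  have hprod : ∏ i, simplexSwapLast j y i ^ (n - 1) =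
      (1 - ∑ i, y i) ^ (n - 1) * ∏ i ∈ Finset.univ \ {j}, y i ^ (n - 1) := by
    rw [Finset.prod_eq_mul_prod_sdiff_singleton_of_mem (Finset.mem_univ j),
      simplexSwapLast_apply_self]
    refine congrArg _ (Finset.prod_congr rfl fun i hi => ?_)
    rw [simplexSwapLast, update_of_ne (by simpa using hi)]
  simp only [dirichletDensity, hprod, sum_simplexSwapLast, sub_sub_cancel,
    Finset.prod_eq_mul_prod_sdiff_singleton_of_mem (Finset.mem_univ j) (fun i => y i ^ (n - 1))]
  ring

end simplexSwapLast

theorem simplexParam_eq_cornerSimplex (m : ℕ) : simplexParam m = cornerSimplex (m - 1) 1 := rfl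

theorem integral_dirichletDensity_mul_comp_simplexCoord (m n : ℕ) (f : ℝ → ℝ) (j : Fin m) :
    ∫ y in simplexParam m, dirichletDensity m n y * f (simplexCoord m j y) =
      ∫ y in simplexParam m, dirichletDensity m n y * f (1 - ∑ i, y i) := by
  unfold simplexCoord
  split_ifs with hj
  · set j' : Fin (m - 1) := ⟨j, hj⟩
    rw [simplexParam_eq_cornerSimplex,
      ← (measurePreserving_simplexSwapLast j').setIntegral_preimage_emb
        (measurableEmbedding_simplexSwapLast j'), preimage_simplexSwapLast_cornerSimplex]
    simp only [dirichletDensity_simplexSwapLast, simplexSwapLast_apply_self]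
  · rfl

theorem integral_dirichletDensity_mul_comp_last {m n : ℕ} (hm : 2 ≤ m) (hn : 1 ≤ n) {f : ℝ → ℝ}
    (hf : Continuous f) :
    ∫ y in simplexParam m, dirichletDensity m n y * f (1 - ∑ i, y i) =
      ((m * n - 1)! / ((n - 1)! * ((m - 1) * n - 1)!) : ℝ) *
        ∫ t in (0 : ℝ)..1, t ^ (n - 1) * (1 - t) ^ ((m - 1) * n - 1) * f t := by
  obtain ⟨k, rfl⟩ : ∃ k, m = k + 2 := ⟨m - 2, by omega⟩
  obtain ⟨a, rfl⟩ : ∃ a, n = a + 1 := ⟨n - 1, by omega⟩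
  have hmn : (k + 2) * (a + 1) - 1 = k * (a + 1) + 2 * a + 1 := by
    rw [Nat.sub_eq_of_eq_add]; ring
  have hm1n : (k + 1) * (a + 1) - 1 = k * (a + 1) + a := by
    rw [Nat.sub_eq_of_eq_add]; ring
  have hGamma_mn : Gamma ((k + 2 : ℕ) * (a + 1 : ℕ)) = (k * (a + 1) + 2 * a + 1)! := by
    rw [← Gamma_nat_eq_factorial]; push_cast; ring_nf
  have hGamma_n : Gamma (a + 1 : ℕ) = a ! := by
    rw [← Gamma_nat_eq_factorial]; push_cast; ring_nf
  have hcore := setIntegral_cornerSimplex_prod_pow_mul (g := fun t => t ^ a * f t)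
    (by fun_prop) a k zero_le_one
  simp only [dirichletDensity, simplexParam_eq_cornerSimplex, mul_assoc, integral_const_mul]
  rw [show k + 2 - 1 = k + 1 from rfl]
  simp only [Nat.add_sub_cancel, hmn, hm1n]
  rw [hcore, hGamma_mn, hGamma_n]
  have hcomm : ∀ t : ℝ, (1 - t) ^ (k * (a + 1) + a) * (t ^ a * f t) =
      t ^ a * ((1 - t) ^ (k * (a + 1) + a) * f t) := fun t => by ring
  simp_rw [hcomm]
  field_simp
  ring

theorem average_dirichlet_coord_entropy_general (m n : ℕ) (hn : 1 ≤ n)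
    (j : Fin m) :
    ∫ y in simplexParam m,
        dirichletDensity m n y *
          (-(simplexCoord m j y * Real.log (simplexCoord m j y))) =
      (1 / m : ℝ) * ((harmonic (m * n) : ℝ) - (harmonic n : ℝ)) := by
  obtain rfl | hm2 : m = 1 ∨ 2 ≤ m := by have := j.pos; omega
  · simp [simplexCoord]
  have hent : ∀ x : ℝ, -(x * log x) = negMulLog x := fun x => by simp [negMulLog]
  simp_rw [hent]
  rw [integral_dirichletDensity_mul_comp_simplexCoord,
    integral_dirichletDensity_mul_comp_last hm2 hn continuous_negMulLog,
    integral_pow_mul_one_sub_pow_mul_negMulLog]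
  have hmn : n ≤ m * n := Nat.le_mul_of_pos_left n (by omega)
  have hm1n : n ≤ (m - 1) * n := Nat.le_mul_of_pos_left n (by omega)
  rw [show n - 1 + 1 = n by omega,
    show n - 1 + ((m - 1) * n - 1) + 2 = m * n by rw [Nat.sub_one_mul] at hm1n ⊢; omega,
    ← Nat.mul_factorial_pred (n := m * n) (by omega), ← Nat.mul_factorial_pred (n := n) (by omega)]
  push_cast
  field_simp

theorem average_dirichlet_coord_entropy (m n : ℕ) (hm : 1 ≤ m) (hn : 1 ≤ n)
    (j : Fin m) :
    ∫ y in simplexParam m,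
        dirichletDensity m n y *
          (-(simplexCoord m j y * Real.log (simplexCoord m j y))) =
      (1 / m : ℝ) * ((harmonic (m * n) : ℝ) - (harmonic n : ℝ)) :=
  average_dirichlet_coord_entropy_general m n hn j
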